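/- Let C be a normed *-algebra, A ⊆ C a *-subalgebra and X ⊆ C a subspace with AX ⊆ X, XA ⊆ X, X*X ⊆ A, XX* ⊆ A. Then the closed *-subalgebra A[X] of C generated by A ∪ X equals the closure of Σ_{k∈ℤ} X^k. -/

import Mathlib

variable {C : Type*} [NonUnitalNormedRing C] [StarRing C] [NormedSpace ℂ C]
  [IsScalarTower ℂ C C] [SMulCommClass ℂ C C] [StarModule ℂ C] [NormedStarGroup C]

/-- `mulSpan X Y` is the closed linear span of the elementwise products `{x * y}`. -/
def mulSpan (X Y : Set C) : Set C :=
  closure (Submodule.span ℂ {z : C | ∃ x ∈ X, ∃ y ∈ Y, z = x * y} : Set C)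

/-- `addCl X Y` is the closure of the set of elementwise sums. -/
def addCl (X Y : Set C) : Set C :=
  closure {z : C | ∃ x ∈ X, ∃ y ∈ Y, z = x + y}

/-- `sumCl X` is the closure of the set of finite sums from the family `X`. -/
def sumCl {ι : Type*} (X : ι → Set C) : Set C :=
  closure {z : C | ∃ (s : Finset ι) (f : ι → C), (∀ i ∈ s, f i ∈ X i) ∧ z = ∑ i ∈ s, f i}

/-- `npowSet X n` is the `(n+1)`-fold closed-span product `X · X ⋯ X`. -/
def npowSet (X : Set C) : ℕ → Set C
  | 0 => X
  | n + 1 => mulSpan (npowSet X n) X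

/-- Integer powers: `X^k` for `k ≥ 1`, `X^0 = A`, `X^k = (X*)^(-k)` for `k ≤ -1`. -/
def zpowSet (A X : Set C) (k : ℤ) : Set C :=
  if k = 0 then A
  else if 0 < k then npowSet X (k.toNat - 1)
  else npowSet ((star ·) '' X) ((-k).toNat - 1)


set_option linter.unusedSectionVars false

open Submodule Set

def mulSet (X Y : Set C) : Set C := {z : C | ∃ x ∈ X, ∃ y ∈ Y, z = x * y}

def mulSpanSub (X Y : Set C) : Submodule ℂ C := (span ℂ (mulSet X Y)).topologicalClosure

lemma coe_mulSpanSub (X Y : Set C) : (mulSpanSub X Y : Set C) = mulSpan X Y :=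
  Submodule.topologicalClosure_coe _

lemma mulSpan_subset_of_closed {X Y : Set C} {M : Submodule ℂ C} (hc : IsClosed (M : Set C))
    (h : ∀ x ∈ X, ∀ y ∈ Y, x * y ∈ M) : mulSpan X Y ⊆ M := by
  refine closure_minimal ?_ hc
  refine (SetLike.coe_subset_coe.mpr (span_le.mpr ?_))
  rintro z ⟨x, hx, y, hy, rfl⟩
  exact h x hx y hy

lemma mul_mem_mulSpan {X Y : Set C} {x y : C} (hx : x ∈ X) (hy : y ∈ Y) :
    x * y ∈ mulSpan X Y :=
  subset_closure (Submodule.subset_span ⟨x, hx, y, hy, rfl⟩)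

lemma mulSet_subset_mulSpan (X Y : Set C) : mulSet X Y ⊆ mulSpan X Y := by
  rintro z ⟨x, hx, y, hy, rfl⟩; exact mul_mem_mulSpan hx hy

lemma mulSpan_mono {X X' Y Y' : Set C} (hX : X ⊆ X') (hY : Y ⊆ Y') :
    mulSpan X Y ⊆ mulSpan X' Y' := by
  apply closure_mono
  refine SetLike.coe_subset_coe.mpr (span_mono ?_)
  rintro z ⟨x, hx, y, hy, rfl⟩
  exact ⟨x, hX hx, y, hY hy, rfl⟩

lemma mulSpan_closure_span_left (X Y : Set C) :
    mulSpan (closure (span ℂ X : Set C)) Y ⊆ mulSpan X Y := by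
  have hcl : IsClosed ((mulSpanSub X Y : Submodule ℂ C) : Set C) :=
    Submodule.isClosed_topologicalClosure _
  refine mulSpan_subset_of_closed hcl ?_
  intro x hx y hy
  show x * y ∈ (mulSpanSub X Y : Set C)
  rw [coe_mulSpanSub]
  have hmaps : Set.MapsTo (· * y) (span ℂ X : Set C) (span ℂ (mulSet X Y) : Set C) := by
    intro z hz
    have : (LinearMap.mulRight ℂ y) z ∈ Submodule.map (LinearMap.mulRight ℂ y) (span ℂ X) :=
      Submodule.mem_map_of_mem hz
    rw [Submodule.map_span] at this
    refine span_mono ?_ this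
    rintro w ⟨x', hx', rfl⟩
    exact ⟨x', hx', y, hy, rfl⟩
  exact map_mem_closure (f := fun z => z * y) (continuous_mul_right y) hx hmaps

lemma mulSpan_closure_span_right (X Y : Set C) :
    mulSpan X (closure (span ℂ Y : Set C)) ⊆ mulSpan X Y := by
  have hcl : IsClosed ((mulSpanSub X Y : Submodule ℂ C) : Set C) :=
    Submodule.isClosed_topologicalClosure _
  refine mulSpan_subset_of_closed hcl ?_
  intro x hx y hy
  show x * y ∈ (mulSpanSub X Y : Set C)
  rw [coe_mulSpanSub]
  have hmaps : Set.MapsTo (x * ·) (span ℂ Y : Set C) (span ℂ (mulSet X Y) : Set C) := by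
    intro z hz
    have : (LinearMap.mulLeft ℂ x) z ∈ Submodule.map (LinearMap.mulLeft ℂ x) (span ℂ Y) :=
      Submodule.mem_map_of_mem hz
    rw [Submodule.map_span] at this
    refine span_mono ?_ this
    rintro w ⟨y', hy', rfl⟩
    exact ⟨x, hx, y', hy', rfl⟩
  exact map_mem_closure (continuous_mul_left x) hy hmaps

lemma mulSpan_le_left {X X' Y : Set C} (h : X ⊆ closure (span ℂ X' : Set C)) :
    mulSpan X Y ⊆ mulSpan X' Y :=
  (mulSpan_mono h subset_rfl).trans (mulSpan_closure_span_left X' Y)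

lemma mulSpan_le_right {X Y Y' : Set C} (h : Y ⊆ closure (span ℂ Y' : Set C)) :
    mulSpan X Y ⊆ mulSpan X Y' :=
  (mulSpan_mono subset_rfl h).trans (mulSpan_closure_span_right X Y')

lemma mulSpan_self_subset (X Y : Set C) : mulSpan X Y ⊆ closure (span ℂ (mulSet X Y) : Set C) :=
  subset_rfl

lemma mulSpan_assoc (S T U : Set C) : mulSpan (mulSpan S T) U = mulSpan S (mulSpan T U) := by
  apply Set.Subset.antisymm
  · refine (mulSpan_le_left (mulSpan_self_subset S T)).trans ?_
    have hcl : IsClosed ((mulSpanSub S (mulSpan T U) : Submodule ℂ C) : Set C) :=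
      Submodule.isClosed_topologicalClosure _
    refine mulSpan_subset_of_closed hcl ?_
    rintro z ⟨x, hx, y, hy, rfl⟩ u hu
    show x * y * u ∈ (mulSpanSub S (mulSpan T U) : Set C)
    rw [coe_mulSpanSub, mul_assoc]
    exact mul_mem_mulSpan hx (mul_mem_mulSpan hy hu)
  · refine (mulSpan_le_right (mulSpan_self_subset T U)).trans ?_
    have hcl : IsClosed ((mulSpanSub (mulSpan S T) U : Submodule ℂ C) : Set C) :=
      Submodule.isClosed_topologicalClosure _
    refine mulSpan_subset_of_closed hcl ?_
    rintro x hx z ⟨y, hy, u, hu, rfl⟩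
    show x * (y * u) ∈ (mulSpanSub (mulSpan S T) U : Set C)
    rw [coe_mulSpanSub, ← mul_assoc]
    exact mul_mem_mulSpan (mul_mem_mulSpan hx hy) hu

lemma npowSet_succ' (Y : Set C) (n : ℕ) : npowSet Y (n + 1) = mulSpan Y (npowSet Y n) := by
  induction n with
  | zero => rfl
  | succ n ih =>
    show mulSpan (npowSet Y (n + 1)) Y = mulSpan Y (npowSet Y (n + 1))
    conv_lhs => rw [ih]
    rw [mulSpan_assoc]
    rfl

lemma npowSet_add (Y : Set C) (m n : ℕ) :
    mulSpan (npowSet Y m) (npowSet Y n) = npowSet Y (m + n + 1) := by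
  induction n with
  | zero => rfl
  | succ n ih =>
    show mulSpan (npowSet Y m) (mulSpan (npowSet Y n) Y) = _
    rw [← mulSpan_assoc, ih]
    rfl

lemma star_image_closure (s : Set C) :
    (star ·) '' closure s = closure ((star ·) '' s) := by
  apply Set.Subset.antisymm (image_closure_subset_closure_image continuous_star)
  have h1 : (star ·) '' closure ((star ·) '' s) ⊆ closure ((star ·) '' ((star ·) '' s)) :=
    image_closure_subset_closure_image continuous_star
  have h2 : (star ·) '' ((star ·) '' s) = s := by
    rw [Set.image_image]; simp
  rw [h2] at h1
  have h3 := Set.image_mono (f := (star ·)) h1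
  rwa [Set.image_image, show (fun x => star (star x : C)) = id by funext x; simp,
    Set.image_id] at h3

lemma star_image_span_subset (s : Set C) :
    (star ·) '' (span ℂ s : Set C) ⊆ (span ℂ ((star ·) '' s) : Set C) := by
  rintro _ ⟨z, hz, rfl⟩
  induction hz using Submodule.span_induction with
  | mem x hx => exact subset_span ⟨x, hx, rfl⟩
  | zero => simp
  | add x y hx hy ihx ihy =>
    show star (x + y) ∈ _
    rw [star_add]; exact add_mem ihx ihy
  | smul c x hx ih =>
    show star (c • x) ∈ _
    rw [star_smul]
    exact Submodule.smul_mem _ _ ih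

lemma star_image_span (s : Set C) :
    (star ·) '' (span ℂ s : Set C) = (span ℂ ((star ·) '' s) : Set C) := by
  apply Set.Subset.antisymm (star_image_span_subset s)
  have h1 := star_image_span_subset ((star ·) '' s)
  have h2 : (star ·) '' ((star ·) '' s) = s := by rw [Set.image_image]; simp
  rw [h2] at h1
  have h3 := Set.image_mono (f := (star ·)) h1
  rwa [Set.image_image, show (fun x => star (star x : C)) = id by funext x; simp,
    Set.image_id] at h3

lemma star_mulSet (S T : Set C) :
    (star ·) '' mulSet S T = mulSet ((star ·) '' T) ((star ·) '' S) := by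
  ext z
  constructor
  · rintro ⟨_, ⟨x, hx, y, hy, rfl⟩, rfl⟩
    exact ⟨star y, ⟨y, hy, rfl⟩, star x, ⟨x, hx, rfl⟩, by simp [star_mul]⟩
  · rintro ⟨_, ⟨y, hy, rfl⟩, _, ⟨x, hx, rfl⟩, rfl⟩
    exact ⟨x * y, ⟨x, hx, y, hy, rfl⟩, by simp [star_mul]⟩

lemma star_mulSpan (S T : Set C) :
    (star ·) '' mulSpan S T = mulSpan ((star ·) '' T) ((star ·) '' S) := by
  show (star ·) '' closure (span ℂ (mulSet S T) : Set C) = _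
  rw [star_image_closure, star_image_span, star_mulSet]
  rfl

lemma star_npowSet (Y : Set C) (n : ℕ) :
    (star ·) '' npowSet Y n = npowSet ((star ·) '' Y) n := by
  induction n with
  | zero => rfl
  | succ n ih =>
    show (star ·) '' mulSpan (npowSet Y n) Y = _
    rw [star_mulSpan, ih, ← npowSet_succ']

lemma mulSpan_absorb_left {B Y : Set C} (hspan : (span ℂ Y : Set C) = Y)
    (h : ∀ b ∈ B, ∀ y ∈ Y, b * y ∈ Y) (n : ℕ) :
    mulSpan B (npowSet Y n) ⊆ closure (npowSet Y n) := by
  have h0 : mulSpan B Y ⊆ closure Y := by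
    have hsub : mulSet B Y ⊆ Y := by rintro z ⟨b, hb, y, hy, rfl⟩; exact h b hb y hy
    calc mulSpan B Y = closure (span ℂ (mulSet B Y) : Set C) := rfl
      _ ⊆ closure (span ℂ Y : Set C) :=
          closure_mono (SetLike.coe_subset_coe.mpr (span_mono hsub))
      _ = closure Y := by rw [hspan]
  cases n with
  | zero => exact h0
  | succ n =>
    have h0' : mulSpan B Y ⊆ closure (span ℂ Y : Set C) := by rw [hspan]; exact h0
    calc mulSpan B (npowSet Y (n + 1)) = mulSpan B (mulSpan Y (npowSet Y n)) := by
          rw [npowSet_succ']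
      _ = mulSpan (mulSpan B Y) (npowSet Y n) := (mulSpan_assoc _ _ _).symm
      _ ⊆ mulSpan Y (npowSet Y n) := mulSpan_le_left h0'
      _ = npowSet Y (n + 1) := (npowSet_succ' _ _).symm
      _ ⊆ closure _ := subset_closure

lemma mulSpan_absorb_right {B Y : Set C} (hspan : (span ℂ Y : Set C) = Y)
    (h : ∀ y ∈ Y, ∀ b ∈ B, y * b ∈ Y) (n : ℕ) :
    mulSpan (npowSet Y n) B ⊆ closure (npowSet Y n) := by
  have h0 : mulSpan Y B ⊆ closure Y := by
    have hsub : mulSet Y B ⊆ Y := by rintro z ⟨y, hy, b, hb, rfl⟩; exact h y hy b hb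
    calc mulSpan Y B = closure (span ℂ (mulSet Y B) : Set C) := rfl
      _ ⊆ closure (span ℂ Y : Set C) :=
          closure_mono (SetLike.coe_subset_coe.mpr (span_mono hsub))
      _ = closure Y := by rw [hspan]
  cases n with
  | zero => exact h0
  | succ n =>
    have h0' : mulSpan Y B ⊆ closure (span ℂ Y : Set C) := by rw [hspan]; exact h0
    calc mulSpan (npowSet Y (n + 1)) B = mulSpan (mulSpan (npowSet Y n) Y) B := rfl
      _ = mulSpan (npowSet Y n) (mulSpan Y B) := mulSpan_assoc _ _ _
      _ ⊆ mulSpan (npowSet Y n) Y := mulSpan_le_right h0'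
      _ ⊆ closure (npowSet Y (n + 1)) := subset_closure

/-- Target of the mixed-sign collapse. -/
def gcol (Acar Y Z : Set C) (m n : ℕ) : Set C :=
  if m = n then closure Acar
  else if n < m then closure (npowSet Y (m - n - 1))
  else closure (npowSet Z (n - m - 1))

lemma gcol_succ_succ (Acar Y Z : Set C) (m n : ℕ) :
    gcol Acar Y Z (m + 1) (n + 1) = gcol Acar Y Z m n := by
  unfold gcol
  by_cases h1 : m = n
  · simp [h1]
  · rw [if_neg (by omega), if_neg h1]
    by_cases h2 : n < m
    · rw [if_pos (by omega), if_pos h2]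
      have h3 : m + 1 - (n + 1) - 1 = m - n - 1 := by omega
      rw [h3]
    · rw [if_neg (by omega), if_neg h2]
      have h3 : n + 1 - (m + 1) - 1 = n - m - 1 := by omega
      rw [h3]

lemma mixed_collapse {Acar Y Z : Set C}
    (hA : (span ℂ Acar : Set C) = Acar) (hY : (span ℂ Y : Set C) = Y)
    (hZ : (span ℂ Z : Set C) = Z)
    (hYZ : ∀ y ∈ Y, ∀ z ∈ Z, y * z ∈ Acar)
    (hAZ : ∀ a ∈ Acar, ∀ z ∈ Z, a * z ∈ Z)
    (hYA : ∀ y ∈ Y, ∀ a ∈ Acar, y * a ∈ Y)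
    (n : ℕ) : ∀ m : ℕ, mulSpan (npowSet Y m) (npowSet Z n) ⊆ gcol Acar Y Z m n := by
  have hYZc : mulSpan Y Z ⊆ closure (span ℂ Acar : Set C) := by
    have hsub : mulSet Y Z ⊆ Acar := by rintro w ⟨y, hy, z, hz, rfl⟩; exact hYZ y hy z hz
    calc mulSpan Y Z = closure (span ℂ (mulSet Y Z) : Set C) := rfl
      _ ⊆ closure (span ℂ Acar : Set C) :=
        closure_mono (SetLike.coe_subset_coe.mpr (span_mono hsub))
  induction n with
  | zero =>
    intro m
    cases m with
    | zero =>
      have : gcol Acar Y Z 0 0 = closure Acar := by unfold gcol; rw [if_pos rfl]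
      rw [this]
      refine hYZc.trans ?_
      rw [hA]
    | succ m =>
      have hg : gcol Acar Y Z (m + 1) 0 = closure (npowSet Y m) := by
        unfold gcol
        rw [if_neg (by omega), if_pos (by omega)]
        norm_num
      rw [hg]
      calc mulSpan (npowSet Y (m + 1)) (npowSet Z 0)
          = mulSpan (mulSpan (npowSet Y m) Y) Z := rfl
        _ = mulSpan (npowSet Y m) (mulSpan Y Z) := mulSpan_assoc _ _ _
        _ ⊆ mulSpan (npowSet Y m) Acar := mulSpan_le_right (by rw [hA] at hYZc ⊢; exact hYZc)
        _ ⊆ closure (npowSet Y m) := mulSpan_absorb_right hY hYA m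
  | succ n ih =>
    intro m
    cases m with
    | zero =>
      have hg : gcol Acar Y Z 0 (n + 1) = closure (npowSet Z n) := by
        unfold gcol
        rw [if_neg (by omega), if_neg (by omega)]
        norm_num
      rw [hg]
      calc mulSpan (npowSet Y 0) (npowSet Z (n + 1))
          = mulSpan Y (mulSpan Z (npowSet Z n)) := by rw [npowSet_succ']; rfl
        _ = mulSpan (mulSpan Y Z) (npowSet Z n) := (mulSpan_assoc _ _ _).symm
        _ ⊆ mulSpan Acar (npowSet Z n) := mulSpan_le_left hYZc
        _ ⊆ closure (npowSet Z n) := mulSpan_absorb_left hZ hAZ n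
    | succ m =>
      rw [gcol_succ_succ]
      have key : mulSpan (mulSpan Y Z) (npowSet Z n) ⊆ closure (span ℂ (npowSet Z n) : Set C) := by
        refine ((mulSpan_le_left hYZc).trans (mulSpan_absorb_left hZ hAZ n)).trans ?_
        exact closure_mono (Submodule.subset_span)
      calc mulSpan (npowSet Y (m + 1)) (npowSet Z (n + 1))
          = mulSpan (mulSpan (npowSet Y m) Y) (mulSpan Z (npowSet Z n)) := by
            rw [npowSet_succ' Z]; rfl
        _ = mulSpan (npowSet Y m) (mulSpan Y (mulSpan Z (npowSet Z n))) := mulSpan_assoc _ _ _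
        _ = mulSpan (npowSet Y m) (mulSpan (mulSpan Y Z) (npowSet Z n)) := by rw [mulSpan_assoc]
        _ ⊆ mulSpan (npowSet Y m) (npowSet Z n) := mulSpan_le_right key
        _ ⊆ gcol Acar Y Z m n := ih m

lemma span_npowSet {Y : Set C} (hY : (span ℂ Y : Set C) = Y) (n : ℕ) :
    (span ℂ (npowSet Y n) : Set C) = npowSet Y n := by
  cases n with
  | zero => exact hY
  | succ n =>
    show (span ℂ (mulSpan (npowSet Y n) Y) : Set C) = mulSpan (npowSet Y n) Y
    rw [← coe_mulSpanSub, Submodule.span_eq]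

lemma zpow_mul_zpow (A : NonUnitalStarSubalgebra ℂ C) (X : Submodule ℂ C)
    (hAX : ∀ a ∈ A, ∀ x ∈ X, a * x ∈ X) (hXA : ∀ x ∈ X, ∀ a ∈ A, x * a ∈ X)
    (hXsX : ∀ x ∈ X, ∀ y ∈ X, star x * y ∈ A) (hXXs : ∀ x ∈ X, ∀ y ∈ X, x * star y ∈ A)
    (j k : ℤ) :
    mulSpan (zpowSet (A : Set C) (X : Set C) j) (zpowSet (A : Set C) (X : Set C) k)
      ⊆ closure (zpowSet (A : Set C) (X : Set C) (j + k)) := by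
  set Ac := (A : Set C) with hAcdef
  set Xc := (X : Set C) with hXcdef
  set Xs := (star ·) '' Xc with hXsdef
  have hAspan : (span ℂ Ac : Set C) = Ac := by
    apply Set.Subset.antisymm _ Submodule.subset_span
    intro x hx
    induction hx using Submodule.span_induction with
    | mem x hx => exact hx
    | zero => exact zero_mem A
    | add x y hx hy ihx ihy => exact add_mem ihx ihy
    | smul c x hx ih => exact SMulMemClass.smul_mem c ih
  have hXspan : (span ℂ Xc : Set C) = Xc := by rw [hXcdef, Submodule.span_eq]
  have hXsspan : (span ℂ Xs : Set C) = Xs := by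
    rw [hXsdef, ← star_image_span, hXspan]
  have hAX' : ∀ a ∈ Ac, ∀ x ∈ Xc, a * x ∈ Xc := hAX
  have hXA' : ∀ x ∈ Xc, ∀ a ∈ Ac, x * a ∈ Xc := hXA
  have hXXs' : ∀ y ∈ Xc, ∀ z ∈ Xs, y * z ∈ Ac := by
    rintro y hy _ ⟨x, hx, rfl⟩; exact hXXs y hy x hx
  have hXsX' : ∀ z ∈ Xs, ∀ y ∈ Xc, z * y ∈ Ac := by
    rintro _ ⟨x, hx, rfl⟩ y hy; exact hXsX x hx y hy
  have hAXs : ∀ a ∈ Ac, ∀ z ∈ Xs, a * z ∈ Xs := by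
    rintro a ha _ ⟨x, hx, rfl⟩
    exact ⟨x * star a, hXA x hx (star a) (star_mem ha), by show star _ = _; rw [star_mul, star_star]⟩
  have hXsA : ∀ z ∈ Xs, ∀ a ∈ Ac, z * a ∈ Xs := by
    rintro _ ⟨x, hx, rfl⟩ a ha
    exact ⟨star a * x, hAX (star a) (star_mem ha) x hx, by show star _ = _; rw [star_mul, star_star]⟩
  have hAAc : mulSpan Ac Ac ⊆ closure Ac := by
    have hsub : mulSet Ac Ac ⊆ Ac := by
      rintro w ⟨a, ha, b, hb, rfl⟩; exact mul_mem ha hb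
    calc mulSpan Ac Ac = closure (span ℂ (mulSet Ac Ac) : Set C) := rfl
      _ ⊆ closure (span ℂ Ac : Set C) :=
        closure_mono (SetLike.coe_subset_coe.mpr (span_mono hsub))
      _ = closure Ac := by rw [hAspan]
  have hz0 : zpowSet Ac Xc 0 = Ac := by simp [zpowSet]
  have hzpos : ∀ i : ℤ, 0 < i → zpowSet Ac Xc i = npowSet Xc (i.toNat - 1) := by
    intro i hi
    rw [zpowSet, if_neg (by omega), if_pos hi]
  have hzneg : ∀ i : ℤ, i < 0 → zpowSet Ac Xc i = npowSet Xs ((-i).toNat - 1) := by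
    intro i hi
    rw [zpowSet, if_neg (by omega), if_neg (by omega)]
  rcases lt_trichotomy j 0 with hj | hj | hj
  · rcases lt_trichotomy k 0 with hk | hk | hk
    · -- j < 0, k < 0
      rw [hzneg j hj, hzneg k hk, hzneg (j + k) (by omega), npowSet_add]
      have : (-j).toNat - 1 + ((-k).toNat - 1) + 1 = (-(j + k)).toNat - 1 := by omega
      rw [this]
      exact subset_closure
    · -- j < 0, k = 0
      subst hk
      rw [hzneg j hj, hz0, add_zero, hzneg j hj]
      exact mulSpan_absorb_right hXsspan hXsA _
    · -- j < 0, k > 0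
      rw [hzneg j hj, hzpos k hk]
      refine (mixed_collapse hAspan hXsspan hXspan hXsX' hAX' hXsA
        (k.toNat - 1) ((-j).toNat - 1)).trans ?_
      rcases lt_trichotomy (j + k) 0 with h | h | h
      · rw [hzneg _ h]
        unfold gcol
        rw [if_neg (by omega), if_pos (by omega)]
        have : (-j).toNat - 1 - (k.toNat - 1) - 1 = (-(j + k)).toNat - 1 := by omega
        rw [this]
      · rw [h, hz0]
        unfold gcol
        rw [if_pos (by omega)]
      · rw [hzpos _ h]
        unfold gcol
        rw [if_neg (by omega), if_neg (by omega)]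
        have : k.toNat - 1 - ((-j).toNat - 1) - 1 = (j + k).toNat - 1 := by omega
        rw [this]
  · -- j = 0
    subst hj
    rcases lt_trichotomy k 0 with hk | hk | hk
    · rw [hz0, hzneg k hk, zero_add, hzneg k hk]
      exact mulSpan_absorb_left hXsspan hAXs _
    · subst hk
      rw [hz0]
      exact hAAc
    · rw [hz0, hzpos k hk, zero_add, hzpos k hk]
      exact mulSpan_absorb_left hXspan hAX' _
  · rcases lt_trichotomy k 0 with hk | hk | hk
    · -- j > 0, k < 0
      rw [hzpos j hj, hzneg k hk]
      refine (mixed_collapse hAspan hXspan hXsspan hXXs' hAXs hXA'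
        ((-k).toNat - 1) (j.toNat - 1)).trans ?_
      rcases lt_trichotomy (j + k) 0 with h | h | h
      · rw [hzneg _ h]
        unfold gcol
        rw [if_neg (by omega), if_neg (by omega)]
        have : (-k).toNat - 1 - (j.toNat - 1) - 1 = (-(j + k)).toNat - 1 := by omega
        rw [this]
      · rw [h, hz0]
        unfold gcol
        rw [if_pos (by omega)]
      · rw [hzpos _ h]
        unfold gcol
        rw [if_neg (by omega), if_pos (by omega)]
        have : j.toNat - 1 - ((-k).toNat - 1) - 1 = (j + k).toNat - 1 := by omega
        rw [this]
    · subst hk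
      rw [hzpos j hj, hz0, add_zero, hzpos j hj]
      exact mulSpan_absorb_right hXspan hXA' _
    · rw [hzpos j hj, hzpos k hk, hzpos (j + k) (by omega), npowSet_add]
      have : j.toNat - 1 + (k.toNat - 1) + 1 = (j + k).toNat - 1 := by omega
      rw [this]
      exact subset_closure

lemma zpowSet_zero (A X : Set C) : zpowSet A X 0 = A := by simp [zpowSet]

lemma zpowSet_pos (A X : Set C) {i : ℤ} (hi : 0 < i) :
    zpowSet A X i = npowSet X (i.toNat - 1) := by
  rw [zpowSet, if_neg (by omega), if_pos hi]

lemma zpowSet_neg (A X : Set C) {i : ℤ} (hi : i < 0) :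
    zpowSet A X i = npowSet ((star ·) '' X) ((-i).toNat - 1) := by
  rw [zpowSet, if_neg (by omega), if_neg (by omega)]

lemma star_zpowSet (A : NonUnitalStarSubalgebra ℂ C) (X : Set C) (k : ℤ) :
    (star ·) '' zpowSet (A : Set C) X k = zpowSet (A : Set C) X (-k) := by
  have hstarA : (star ·) '' (A : Set C) = (A : Set C) := by
    apply Set.Subset.antisymm
    · rintro _ ⟨a, ha, rfl⟩; exact star_mem ha
    · intro a ha; exact ⟨star a, star_mem ha, star_star a⟩
  have hss : (star ·) '' ((star ·) '' X) = X := by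
    rw [Set.image_image]; simp
  rcases lt_trichotomy k 0 with hk | hk | hk
  · rw [zpowSet_neg _ _ hk, zpowSet_pos _ _ (by omega : (0:ℤ) < -k), star_npowSet, hss]
  · subst hk
    rw [neg_zero, zpowSet_zero, hstarA]
  · rw [zpowSet_pos _ _ hk, zpowSet_neg _ _ (by omega : -k < 0), star_npowSet, neg_neg]

/-- The closed `*`-subalgebra generated by `A ∪ X` is `Σ_{k ∈ ℤ} X^k`. -/
theorem generated_eq_sum_zpow (A : NonUnitalStarSubalgebra ℂ C) (X : Submodule ℂ C)
    (hAX : ∀ a ∈ A, ∀ x ∈ X, a * x ∈ X) (hXA : ∀ x ∈ X, ∀ a ∈ A, x * a ∈ X)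
    (hXsX : ∀ x ∈ X, ∀ y ∈ X, star x * y ∈ A) (hXXs : ∀ x ∈ X, ∀ y ∈ X, x * star y ∈ A) :
    closure ((NonUnitalStarAlgebra.adjoin ℂ ((A : Set C) ∪ (X : Set C)) :
        NonUnitalStarSubalgebra ℂ C) : Set C)
      = closure (sumCl fun k : ℤ => zpowSet (A : Set C) (X : Set C) k) := by
  classical
  have hAspan : (span ℂ (A : Set C) : Set C) = (A : Set C) := by
    apply Set.Subset.antisymm _ Submodule.subset_span
    intro x hx
    induction hx using Submodule.span_induction with
    | mem x hx => exact hx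
    | zero => exact zero_mem A
    | add x y hx hy ihx ihy => exact add_mem ihx ihy
    | smul c x hx ih => exact SMulMemClass.smul_mem c ih
  have hXspan : (span ℂ (X : Set C) : Set C) = (X : Set C) := by rw [Submodule.span_eq]
  have hXsspan : (span ℂ ((star ·) '' (X : Set C)) : Set C) = (star ·) '' (X : Set C) := by
    rw [← star_image_span, hXspan]
  -- the span of each power is itself
  have hspanz : ∀ k : ℤ, (span ℂ (zpowSet (A : Set C) (X : Set C) k) : Set C)
      = zpowSet (A : Set C) (X : Set C) k := by
    intro k
    rcases lt_trichotomy k 0 with hk | hk | hk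
    · rw [zpowSet_neg _ _ hk]; exact span_npowSet hXsspan _
    · subst hk; rw [zpowSet_zero]; exact hAspan
    · rw [zpowSet_pos _ _ hk]; exact span_npowSet hXspan _
  set P : ℤ → Submodule ℂ C := fun k => span ℂ (zpowSet (A : Set C) (X : Set C) k) with hPdef
  have hP : ∀ k, (P k : Set C) = zpowSet (A : Set C) (X : Set C) k := hspanz
  set T : Set C := {z : C | ∃ (s : Finset ℤ) (f : ℤ → C),
    (∀ i ∈ s, f i ∈ zpowSet (A : Set C) (X : Set C) i) ∧ z = ∑ i ∈ s, f i} with hTdef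
  have hT : T = ((⨆ k, P k : Submodule ℂ C) : Set C) := by
    apply Set.Subset.antisymm
    · rintro z ⟨s, f, hf, rfl⟩
      exact Submodule.sum_mem _ fun i hi =>
        (le_iSup P i) (by show f i ∈ (P i : Set C); rw [hP i]; exact hf i hi)
    · intro z hz
      rw [SetLike.mem_coe, Submodule.mem_iSup_iff_exists_finsupp] at hz
      obtain ⟨f, hf, hsum⟩ := hz
      refine ⟨f.support, f, fun i _ => ?_, ?_⟩
      · rw [← hP i]; exact hf i
      · exact hsum.symm
  set M : Submodule ℂ C := (⨆ k, P k : Submodule ℂ C).topologicalClosure with hMdef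
  have hMcoe : (M : Set C) = closure T := by
    rw [hMdef, Submodule.topologicalClosure_coe, hT]
  have hMclosed : IsClosed (M : Set C) := Submodule.isClosed_topologicalClosure _
  have hzsubM : ∀ k, zpowSet (A : Set C) (X : Set C) k ⊆ (M : Set C) := by
    intro k x hx
    exact Submodule.le_topologicalClosure _ (le_iSup P k (by rw [← hP k] at hx; exact hx))
  have hclz : ∀ k, closure (zpowSet (A : Set C) (X : Set C) k) ⊆ (M : Set C) := fun k =>
    closure_minimal (hzsubM k) hMclosed
  have hTmul : ∀ a ∈ T, ∀ b ∈ T, a * b ∈ (M : Set C) := by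
    rintro _ ⟨s, f, hf, rfl⟩ _ ⟨t, g, hg, rfl⟩
    rw [Finset.sum_mul_sum]
    refine Submodule.sum_mem _ fun i hi => Submodule.sum_mem _ fun j hj => ?_
    exact hclz (i + j)
      ((zpow_mul_zpow A X hAX hXA hXsX hXXs i j) (mul_mem_mulSpan (hf i hi) (hg j hj)))
  have hMmul : ∀ x ∈ (M : Set C), ∀ y ∈ (M : Set C), x * y ∈ (M : Set C) := by
    intro x hx y hy
    rw [hMcoe] at hx hy
    have := map_mem_closure₂ continuous_mul hx hy hTmul
    rwa [hMclosed.closure_eq] at this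
  have hstarT : Set.MapsTo (star ·) T T := by
    rintro _ ⟨s, f, hf, rfl⟩
    refine ⟨s.image Neg.neg, fun i => star (f (-i)), ?_, ?_⟩
    · intro i hi
      rw [Finset.mem_image] at hi
      obtain ⟨j, hj, rfl⟩ := hi
      show star (f (- -j)) ∈ zpowSet (A : Set C) (X : Set C) (-j)
      rw [neg_neg]
      have hmem : star (f j) ∈ (star ·) '' zpowSet (A : Set C) (X : Set C) j :=
        Set.mem_image_of_mem _ (hf j hj)
      rwa [star_zpowSet] at hmem
    · show star (∑ i ∈ s, f i) = ∑ i ∈ s.image Neg.neg, star (f (-i))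
      rw [star_sum, Finset.sum_image (fun a _ b _ h => neg_injective h)]
      simp
  have hMstar : ∀ x ∈ (M : Set C), star x ∈ (M : Set C) := by
    intro x hx
    rw [hMcoe] at hx ⊢
    exact map_mem_closure continuous_star hx hstarT
  -- B: the closed star subalgebra on M
  set B : NonUnitalStarSubalgebra ℂ C :=
    { carrier := (M : Set C)
      zero_mem' := M.zero_mem
      add_mem' := fun ha hb => M.add_mem ha hb
      smul_mem' := fun c {x} hx => M.smul_mem c hx
      mul_mem' := fun {a b} ha hb => hMmul a ha b hb
      star_mem' := fun {a} ha => hMstar a ha } with hBdef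
  have hR : closure (sumCl fun k : ℤ => zpowSet (A : Set C) (X : Set C) k) = (M : Set C) := by
    show closure (closure T) = (M : Set C)
    rw [closure_closure, hMcoe]
  rw [hR]
  apply Set.Subset.antisymm
  · -- adjoin ⊆ M
    have hsub : (A : Set C) ∪ (X : Set C) ⊆ (B : Set C) := by
      apply Set.union_subset
      · rw [← zpowSet_zero (A : Set C) (X : Set C)]
        exact hzsubM 0
      · have h1 : zpowSet (A : Set C) (X : Set C) 1 = (X : Set C) := by
          rw [zpowSet_pos _ _ (by omega : (0:ℤ) < 1)]
          rfl
        rw [← h1]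
        exact hzsubM 1
    have hle := NonUnitalStarAlgebra.adjoin_le hsub
    exact closure_minimal (SetLike.coe_subset_coe.mpr hle) hMclosed
  · -- M ⊆ closure adjoin
    set D : Submodule ℂ C :=
      ((NonUnitalStarAlgebra.adjoin ℂ ((A : Set C) ∪ (X : Set C))
        ).toNonUnitalSubalgebra.toSubmodule).topologicalClosure with hDdef
    have hDcoe : (D : Set C) = closure ((NonUnitalStarAlgebra.adjoin ℂ
        ((A : Set C) ∪ (X : Set C)) : NonUnitalStarSubalgebra ℂ C) : Set C) := by
      rw [hDdef, Submodule.topologicalClosure_coe, NonUnitalSubalgebra.coe_toSubmodule,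
        NonUnitalStarSubalgebra.coe_toNonUnitalSubalgebra]
    have hDclosed : IsClosed (D : Set C) := Submodule.isClosed_topologicalClosure _
    have hadj : ((NonUnitalStarAlgebra.adjoin ℂ ((A : Set C) ∪ (X : Set C)) :
        NonUnitalStarSubalgebra ℂ C) : Set C) ⊆ (D : Set C) := by
      rw [hDcoe]; exact subset_closure
    have hDmul : ∀ x ∈ (D : Set C), ∀ y ∈ (D : Set C), x * y ∈ (D : Set C) := by
      intro x hx y hy
      rw [hDcoe] at hx hy ⊢
      refine map_mem_closure₂ continuous_mul hx hy ?_
      intro a ha b hb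
      exact mul_mem ha hb
    have hnpowD : ∀ (Y : Set C), Y ⊆ (D : Set C) → ∀ n, npowSet Y n ⊆ (D : Set C) := by
      intro Y hY n
      induction n with
      | zero => exact hY
      | succ n ih =>
        show mulSpan (npowSet Y n) Y ⊆ (D : Set C)
        refine mulSpan_subset_of_closed hDclosed ?_
        intro u hu y hy
        exact hDmul u (ih hu) y (hY hy)
    have hAD : (A : Set C) ⊆ (D : Set C) := fun a ha =>
      hadj (NonUnitalStarAlgebra.subset_adjoin ℂ _ (Or.inl ha))
    have hXD : (X : Set C) ⊆ (D : Set C) := fun x hx =>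
      hadj (NonUnitalStarAlgebra.subset_adjoin ℂ _ (Or.inr hx))
    have hXsD : (star ·) '' (X : Set C) ⊆ (D : Set C) := by
      rintro _ ⟨x, hx, rfl⟩
      have hxadj : x ∈ NonUnitalStarAlgebra.adjoin ℂ ((A : Set C) ∪ (X : Set C)) :=
        NonUnitalStarAlgebra.subset_adjoin ℂ _ (Or.inr hx)
      exact hadj (star_mem hxadj)
    have hzD : ∀ k, zpowSet (A : Set C) (X : Set C) k ⊆ (D : Set C) := by
      intro k
      rcases lt_trichotomy k 0 with hk | hk | hk
      · rw [zpowSet_neg _ _ hk]; exact hnpowD _ hXsD _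
      · subst hk; rw [zpowSet_zero]; exact hAD
      · rw [zpowSet_pos _ _ hk]; exact hnpowD _ hXD _
    have hTD : T ⊆ (D : Set C) := by
      rintro _ ⟨s, f, hf, rfl⟩
      exact Submodule.sum_mem _ fun i hi => hzD i (hf i hi)
    calc (M : Set C) = closure T := hMcoe
      _ ⊆ (D : Set C) := closure_minimal hTD hDclosed
      _ = _ := hDcoe
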